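/- arXiv:1606.00995 — 5 statements merged into one kernel-verified Lean document; each statement's English description precedes it below -/
import Mathlib

section
/- Let m ≥ 1 and let M, D, a be real m×m matrices such that M is symmetric positive definite, M·a is symmetric (i.e. M a = aᵀ M), and M·a is positive semidefinite. Then for every integer s ≥ 1 and every vector u ∈ ℝ^m, uᵀ M (M⁻¹ Dᵀ M a D)^s u ≥ 0. (Hence adding the artificial dissipation term −ε (M⁻¹ Dᵀ M a D)^s u with ε ≥ 0 to a semidiscretisation does not increase the discrete energy uᵀ M u; this is the core of Lemma 1 on semidiscrete stability.) -/
open Matrix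

lemma key_aux {m : ℕ} (C N S : Matrix (Fin m) (Fin m) ℝ) (h : S * S = C) :
    ∀ k : ℕ, C * (N * C) ^ k = S * (S * N * S) ^ k * S := by
  intro k
  induction k with
  | zero => simp [h.symm]
  | succ k ih =>
    rw [pow_succ, pow_succ, ← mul_assoc, ih, ← h]
    noncomm_ring

theorem stmt_1 (m : ℕ) (hm : 1 ≤ m) (M D a : Matrix (Fin m) (Fin m) ℝ)
    (hMpd : M.PosDef) (hMa_symm : M * a = aᵀ * M) (hMa_psd : (M * a).PosSemidef)
    (s : ℕ) (hs : 1 ≤ s) (u : Fin m → ℝ) :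
    0 ≤ dotProduct u
      (Matrix.mulVec (M * (M⁻¹ * Dᵀ * M * a * D) ^ s) u) := by
  have hDht : Dᵀ = Dᴴ := by ext i j; simp [conjTranspose]
  have hCpsd : (Dᵀ * (M * a) * D).PosSemidef := by
    rw [hDht]; exact hMa_psd.conjTranspose_mul_mul_same D
  set C := Dᵀ * (M * a) * D with hCdef
  have hMinv : M⁻¹.PosDef := hMpd.inv
  obtain ⟨k, rfl⟩ := Nat.exists_eq_add_of_le hs
  have hB : M⁻¹ * Dᵀ * M * a * D = M⁻¹ * C := by
    rw [hCdef]; noncomm_ring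
  have hMB : M * (M⁻¹ * C) = C := by
    rw [← mul_assoc, mul_nonsing_inv _ (isUnit_iff_isUnit_det _ |>.1 hMpd.isUnit), one_mul]
  have hmain : M * (M⁻¹ * Dᵀ * M * a * D) ^ (1 + k) = C * (M⁻¹ * C) ^ k := by
    rw [hB, pow_add, pow_one, ← mul_assoc, hMB]
  obtain ⟨S, hSpsd, hSS⟩ : ∃ S : Matrix (Fin m) (Fin m) ℝ, S.PosSemidef ∧ S * S = C :=
    by open scoped MatrixOrder in exact ⟨CFC.sqrt C, (CFC.sqrt_nonneg C).posSemidef, CFC.sqrt_mul_sqrt_self C hCpsd.nonneg⟩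
  rw [hmain, key_aux C M⁻¹ S hSS k]
  have hSherm : Sᴴ = S := hSpsd.isHermitian
  have hpsd : (S * (S * M⁻¹ * S) ^ k * S).PosSemidef := by
    have h1 : (S * M⁻¹ * S).PosSemidef := by
      have := hMinv.posSemidef.mul_mul_conjTranspose_same S
      rwa [hSherm] at this
    have h2 := (h1.pow k).mul_mul_conjTranspose_same S
    rwa [hSherm] at h2
  have := hpsd.dotProduct_mulVec_nonneg u
  simpa using this
end

section
/- Let p ≥ 1 and let Π denote the L²(−1,1)-orthogonal projection onto the space of real polynomials of degree ≤ p. Then for every integer k with 0 ≤ k ≤ p, ∫₋₁¹ φ_k′(x) · Π((1 − x²) φ_p′)(x) dx equals 2 p (p+1)/(2p+1) if k = p and equals 0 if k < p, where φ_n denotes the n-th Legendre polynomial. (Hence in a modal Legendre basis the discrete viscosity operator −M⁻¹ Dᵀ M a D with a(x) = 1 − x² has φ_p as an eigenvector with the exact eigenvalue −p(p+1).) -/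
open Polynomial intervalIntegral

/-- The `n`-th Legendre polynomial, via Rodrigues' formula
`φ_n(x) = (1/(2ⁿ n!)) dⁿ/dxⁿ (x² − 1)ⁿ`. -/
noncomputable def legendre (n : ℕ) : Polynomial ℝ :=
  Polynomial.C (1 / (2 ^ n * n.factorial : ℝ)) *
    (Polynomial.derivative^[n] ((Polynomial.X ^ 2 - 1) ^ n))

noncomputable def pint (f : Polynomial ℝ) : ℝ := ∫ x in (-1:ℝ)..1, f.eval x

lemma poly_ii (f : Polynomial ℝ) :
    IntervalIntegrable (fun x => f.eval x) MeasureTheory.volume (-1:ℝ) 1 :=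
  (f.continuous_aeval).intervalIntegrable _ _

lemma pint_deriv (f : Polynomial ℝ) :
    pint (derivative f) = f.eval 1 - f.eval (-1) := by
  unfold pint
  exact intervalIntegral.integral_eq_sub_of_hasDerivAt
    (fun x _ => f.hasDerivAt x) (poly_ii _)

lemma pint_add (f g : Polynomial ℝ) : pint (f + g) = pint f + pint g := by
  unfold pint
  simp only [eval_add]
  exact intervalIntegral.integral_add (poly_ii f) (poly_ii g)

lemma pint_C_mul (a : ℝ) (f : Polynomial ℝ) : pint (C a * f) = a * pint f := by
  unfold pint
  simp only [eval_mul, eval_C]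
  exact intervalIntegral.integral_const_mul a _

lemma pint_neg (f : Polynomial ℝ) : pint (-f) = - pint f := by
  unfold pint; simp only [eval_neg]; exact intervalIntegral.integral_neg

lemma pint_ibp (f g : Polynomial ℝ) :
    pint (derivative f * g) =
      f.eval 1 * g.eval 1 - f.eval (-1) * g.eval (-1) - pint (f * derivative g) := by
  have h := pint_deriv (f * g)
  rw [derivative_mul, pint_add] at h
  simp only [eval_mul] at h
  linarith

lemma dvd_iter (p i : ℕ) (h : i ≤ p) :
    ((X:Polynomial ℝ)^2 - 1)^(p - i) ∣ derivative^[i] (((X:Polynomial ℝ)^2 - 1)^p) := by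
  induction i with
  | zero => simp
  | succ i ih =>
    obtain ⟨g, hg⟩ := ih (Nat.le_of_succ_le h)
    rw [Function.iterate_succ_apply', hg, derivative_mul, derivative_pow]
    have h1 : p - i = (p - (i+1)) + 1 := by omega
    rw [h1]
    apply dvd_add
    · apply Dvd.dvd.mul_right
      apply Dvd.dvd.mul_right
      rw [show (p - (i+1)) + 1 - 1 = p - (i+1) by omega]
      exact Dvd.dvd.mul_left dvd_rfl _
    · exact Dvd.dvd.mul_right (pow_dvd_pow _ (by omega)) _

lemma eval_iter_zero (p i : ℕ) (h : i < p) (x : ℝ) (hx : x^2 = 1) :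
    (derivative^[i] (((X:Polynomial ℝ)^2 - 1)^p)).eval x = 0 := by
  obtain ⟨g, hg⟩ := dvd_iter p i h.le
  rw [hg, eval_mul, eval_pow, eval_sub, eval_pow, eval_one, eval_X, hx, sub_self,
    zero_pow (by omega), zero_mul]

lemma pint_ibp_iter (m : ℕ) (u : Polynomial ℝ)
    (hb : ∀ i < m, (derivative^[i] u).eval 1 = 0 ∧ (derivative^[i] u).eval (-1) = 0) :
    ∀ q : Polynomial ℝ, pint (derivative^[m] u * q) = (-1)^m * pint (u * derivative^[m] q) := by
  induction m with
  | zero => intro q; simp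
  | succ m ih =>
    intro q
    rw [Function.iterate_succ_apply', pint_ibp, (hb m (by omega)).1, (hb m (by omega)).2,
      ih (fun i hi => hb i (by omega)) (derivative q)]
    rw [show derivative^[m] (derivative q) = derivative^[m+1] q from
      (Function.iterate_succ_apply derivative m q).symm]
    ring

lemma pint_one : pint (1 : Polynomial ℝ) = 2 := by
  unfold pint; simp; norm_num

lemma Jrec (p : ℕ) :
    pint (((X:Polynomial ℝ)^2-1)^(p+1)) =
      -(2*(p:ℝ)+2)/(2*(p:ℝ)+3) * pint (((X:Polynomial ℝ)^2-1)^p) := by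
  have key : derivative (((X:Polynomial ℝ)^2-1)^(p+1)) * X
      = C ((2:ℝ)*((p:ℝ)+1)) * ((((X:Polynomial ℝ)^2-1)^(p+1)) + ((X:Polynomial ℝ)^2-1)^p) := by
    rw [derivative_pow]
    simp only [Nat.add_sub_cancel, derivative_sub, derivative_pow, derivative_X, derivative_one,
      Nat.cast_add, Nat.cast_one, pow_one, mul_one]
    norm_num [C_mul]
    ring
  have h1 := pint_ibp (((X:Polynomial ℝ)^2-1)^(p+1)) X
  rw [key] at h1
  rw [pint_C_mul, pint_add] at h1
  simp only [eval_pow, eval_sub, eval_one, eval_X, derivative_X, mul_one] at h1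
  norm_num at h1
  -- h1 : 2*((p:ℝ)+1) * (J_{p+1} + J_p) = - J_{p+1}
  have h3 : (2*(p:ℝ)+3) ≠ 0 := by positivity
  field_simp
  try linear_combination h1

lemma Jval (p : ℕ) :
    pint (((X:Polynomial ℝ)^2-1)^p) =
      (-1)^p * 2^(2*p+1) * ((p.factorial : ℝ))^2 / ((2*p+1).factorial : ℝ) := by
  induction p with
  | zero => simpa using pint_one
  | succ p ih =>
    rw [Jrec, ih]
    have e1 : (2*(p+1)+1).factorial = (2*p+3) * ((2*p+2) * (2*p+1).factorial) := by
      rw [show 2*(p+1)+1 = (2*p+2)+1 by ring, Nat.factorial_succ, show 2*p+2 = (2*p+1)+1 by ring,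
        Nat.factorial_succ]
      try ring
    have e2 : (p+1).factorial = (p+1) * p.factorial := Nat.factorial_succ p
    have h0 : ((2*p+1).factorial : ℝ) ≠ 0 := by positivity
    have h3 : (2*(p:ℝ)+3) ≠ 0 := by positivity
    rw [e1, e2]
    push_cast
    field_simp
    rw [show 2*(p+1)+1 = (2*p+1)+2 by ring, pow_add, pow_succ]
    push_cast
    ring

lemma pint_zero : pint (0 : Polynomial ℝ) = 0 := by unfold pint; simp

lemma monic_base (p : ℕ) : (((X:Polynomial ℝ)^2 - 1)^p).Monic := by
  apply Monic.pow
  have : ((X:Polynomial ℝ)^2 - 1) = X^2 - C 1 := by simp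
  rw [this]
  exact monic_X_pow_sub_C 1 (by norm_num)

lemma natDegree_base (p : ℕ) : (((X:Polynomial ℝ)^2 - 1)^p).natDegree = 2*p := by
  have : ((X:Polynomial ℝ)^2 - 1) = X^2 - C 1 := by simp
  rw [Monic.natDegree_pow (by rw [this]; exact monic_X_pow_sub_C 1 (by norm_num)), this,
    natDegree_X_pow_sub_C]
  ring

lemma legendre_natDegree_le (p : ℕ) : (legendre p).natDegree ≤ p := by
  unfold legendre
  refine (natDegree_mul_le).trans ?_
  simp only [natDegree_C, zero_add]
  refine (natDegree_iterate_derivative _ _).trans ?_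
  rw [natDegree_base]; omega

lemma pint_legendre_iter (p : ℕ) (q : Polynomial ℝ) :
    pint (legendre p * q) =
      (1 / (2 ^ p * p.factorial : ℝ)) * ((-1)^p *
        pint ((((X:Polynomial ℝ)^2 - 1)^p) * derivative^[p] q)) := by
  unfold legendre
  rw [mul_assoc, pint_C_mul, pint_ibp_iter p _ (fun i hi =>
    ⟨eval_iter_zero p i hi 1 (by norm_num), eval_iter_zero p i hi (-1) (by norm_num)⟩)]

lemma pint_legendre_orth (p : ℕ) (q : Polynomial ℝ) (h : derivative^[p] q = 0) :
    pint (legendre p * q) = 0 := by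
  rw [pint_legendre_iter, h, mul_zero, pint_zero]
  ring

lemma pint_legendre_Xp (p : ℕ) :
    pint (legendre p * X^p) =
      (1 / (2 ^ p * p.factorial : ℝ)) * ((-1)^p * ((p.factorial : ℝ) *
        pint (((X:Polynomial ℝ)^2 - 1)^p))) := by
  rw [pint_legendre_iter, iterate_derivative_X_pow_eq_C_mul]
  simp only [Nat.sub_self, pow_zero, mul_one, Nat.descFactorial_self]
  rw [mul_comm (((X:Polynomial ℝ)^2-1)^p), pint_C_mul]

lemma legendre_coeff (p : ℕ) :
    (legendre p).coeff p = (1 / (2 ^ p * p.factorial : ℝ)) * ((2*p).descFactorial p : ℝ) := by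
  unfold legendre
  rw [coeff_C_mul, coeff_iterate_derivative]
  have h2 : p + p = (((X:Polynomial ℝ)^2 - 1)^p).natDegree := by rw [natDegree_base]; ring
  rw [h2, (monic_base p).coeff_natDegree]
  rw [natDegree_base]
  simp

lemma pint_legendre_deg_le (p : ℕ) (hp : 1 ≤ p) (q : Polynomial ℝ) (hq : q.natDegree ≤ p) :
    pint (legendre p * q) = q.coeff p * pint (legendre p * X^p) := by
  set a := q.coeff p with ha
  set r := q - C a * X^p with hr
  have hdr : derivative^[p] r = 0 := by
    rcases eq_or_ne r 0 with h | h
    · rw [h]; simp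
    · apply iterate_derivative_eq_zero
      rw [Polynomial.natDegree_lt_iff_degree_lt h]
      rw [Polynomial.degree_lt_iff_coeff_zero]
      intro m hm
      have hm' : p ≤ m := by exact_mod_cast hm
      rw [hr]
      simp only [coeff_sub, coeff_C_mul, coeff_X_pow]
      rcases eq_or_lt_of_le hm' with h1 | h1
      · rw [← h1]; simp [ha]
      · rw [coeff_eq_zero_of_natDegree_lt (lt_of_le_of_lt hq h1)]
        simp [Nat.ne_of_gt h1]
  have hq' : q = C a * X^p + r := by rw [hr]; ring
  rw [hq', mul_add, pint_add, pint_legendre_orth p r hdr, add_zero,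
    show legendre p * (C a * X^p) = C a * (legendre p * X^p) by ring, pint_C_mul]

lemma pint_sub (f g : Polynomial ℝ) : pint (f - g) = pint f - pint g := by
  rw [sub_eq_add_neg, pint_add, pint_neg]; ring

lemma natDegree_one_sub_X_sq : ((1:Polynomial ℝ) - X^2).natDegree = 2 := by
  rw [show (1:Polynomial ℝ) - X^2 = -(X^2 - C 1) by simp, natDegree_neg, natDegree_X_pow_sub_C]

theorem stmt_7 (p : ℕ) (hp : 1 ≤ p) (proj : Polynomial ℝ → Polynomial ℝ)
    (hdeg : ∀ f : Polynomial ℝ, (proj f).degree ≤ p)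
    (hortho : ∀ f q : Polynomial ℝ, q.degree ≤ p →
      ∫ x in (-1 : ℝ)..1, (f.eval x - (proj f).eval x) * q.eval x = 0)
    (k : ℕ) (hk : k ≤ p) :
    (∫ x in (-1 : ℝ)..1,
        (derivative (legendre k)).eval x *
          (proj ((1 - Polynomial.X ^ 2) * derivative (legendre p))).eval x)
      = if k = p then 2 * (p : ℝ) * ((p : ℝ) + 1) / (2 * (p : ℝ) + 1) else 0 := by
  set g : Polynomial ℝ := (1 - X ^ 2) * derivative (legendre p) with hg
  set Dk : Polynomial ℝ := derivative (legendre k) with hDk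
  -- the integral as pint
  have step0 : (∫ x in (-1 : ℝ)..1, Dk.eval x * (proj g).eval x) = pint (Dk * proj g) := by
    unfold pint; simp only [eval_mul]
  -- orthogonality hypothesis in pint form
  have horth' : pint ((g - proj g) * Dk) = 0 := by
    have hdegDk : Dk.degree ≤ (p : WithBot ℕ) := by
      refine degree_le_natDegree.trans ?_
      have h1 : Dk.natDegree ≤ p := by
        refine (natDegree_derivative_le _).trans ?_
        have := legendre_natDegree_le k
        omega
      exact_mod_cast Nat.cast_le.mpr h1
    have := hortho g Dk hdegDk
    rw [← this]; unfold pint; simp only [eval_mul, eval_sub]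
  -- reduce to pint (Dk * g)
  have step1 : pint (Dk * proj g) = pint (Dk * g) := by
    have hid : Dk * proj g = Dk * g - (g - proj g) * Dk := by ring
    rw [hid, pint_sub, horth', sub_zero]
  -- swap to u
  set u : Polynomial ℝ := (1 - X ^ 2) * derivative (legendre k) with hu
  have step2 : pint (Dk * g) = - pint (legendre p * derivative u) := by
    have hid : Dk * g = derivative (legendre p) * u := by rw [hg, hu, hDk]; ring
    rw [hid, pint_ibp]
    have e1 : u.eval 1 = 0 := by rw [hu]; simp
    have e2 : u.eval (-1) = 0 := by rw [hu]; simp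
    rw [e1, e2]; ring
  rw [step0, step1, step2]
  rcases eq_or_lt_of_le hk with hkp | hkp
  · -- k = p
    subst hkp
    rw [if_pos rfl]
    have hndu : (derivative u).natDegree ≤ k := by
      refine (natDegree_derivative_le _).trans ?_
      have h1 : u.natDegree ≤ 2 + (k - 1) := by
        refine (natDegree_mul_le).trans ?_
        have := natDegree_derivative_le (legendre k)
        have := legendre_natDegree_le k
        rw [natDegree_one_sub_X_sq]
        omega
      omega
    rw [pint_legendre_deg_le k hp _ hndu]
    -- compute the coefficient
    have hcoeff : (derivative u).coeff k = -((k:ℝ) * ((k:ℝ)+1) * (legendre k).coeff k) := by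
      rw [coeff_derivative]
      have husplit : u = derivative (legendre k) - X^2 * derivative (legendre k) := by
        rw [hu]; ring
      have h1 : (derivative (legendre k)).coeff (k+1) = 0 := by
        apply coeff_eq_zero_of_natDegree_lt
        have := natDegree_derivative_le (legendre k)
        have := legendre_natDegree_le k
        omega
      have h2 : ((X:Polynomial ℝ)^2 * derivative (legendre k)).coeff (k+1)
          = (legendre k).coeff k * k := by
        rw [show k + 1 = (k-1) + 2 by omega, coeff_X_pow_mul, coeff_derivative,
          show k - 1 + 1 = k by omega]
        push_cast [show k - 1 + 1 = k by omega]
        rw [Nat.cast_sub hp]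
        push_cast
        ring
      rw [husplit, coeff_sub, h1, h2]
      push_cast
      ring
    rw [hcoeff, pint_legendre_Xp, legendre_coeff, Jval]
    have hD : ((2*k).descFactorial k : ℝ) * (k.factorial : ℝ) = ((2*k).factorial : ℝ) := by
      have := Nat.factorial_mul_descFactorial (show k ≤ 2*k by omega)
      rw [show 2*k - k = k by omega] at this
      exact_mod_cast by rw [mul_comm]; exact_mod_cast congrArg (Nat.cast (R := ℝ)) this
    have hF : ((2*k+1).factorial : ℝ) = (2*(k:ℝ)+1) * ((2*k).factorial : ℝ) := by
      rw [Nat.factorial_succ]; push_cast; ring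
    have hfac : (k.factorial : ℝ) ≠ 0 := by positivity
    have h2k : ((2*k).factorial : ℝ) ≠ 0 := by positivity
    have h2k1 : (2*(k:ℝ)+1) ≠ 0 := by positivity
    have hpow : ((-1:ℝ))^k * (-1)^k = 1 := by
      rw [← pow_add]; exact Even.neg_one_pow ⟨k, by ring⟩
    have hpow2 : (2:ℝ)^(2*k+1) = 2 * ((2:ℝ)^k)^2 := by
      rw [pow_add, pow_mul']; ring
    rw [hF]
    rw [hpow2, ← hD]
    have hpow' : ((-1:ℝ))^k * ((-1:ℝ))^k = 1 := hpow
    generalize ((-1:ℝ))^k = s at hpow' ⊢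
    have hD0 : (((2*k).descFactorial k : ℕ) : ℝ) ≠ 0 := by rw [← hD] at h2k; exact left_ne_zero_of_mul h2k
    field_simp
    linear_combination hpow'
  · -- k < p
    rw [if_neg (by omega)]
    rcases Nat.eq_zero_or_pos k with hk0 | hk1
    · subst hk0
      have : derivative (legendre 0) = 0 := by
        unfold legendre
        simp
      rw [hu, this, mul_zero]
      simp [pint_zero, pint_legendre_orth p 0 (by simp)]
    · have hdu0 : derivative^[p] (derivative u) = 0 := by
        apply iterate_derivative_eq_zero
        have h1 : u.natDegree ≤ 2 + (k - 1) := by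
          refine (natDegree_mul_le).trans ?_
          have := natDegree_derivative_le (legendre k)
          have := legendre_natDegree_le k
          rw [natDegree_one_sub_X_sq]
          omega
        have := natDegree_derivative_le u
        omega
      rw [pint_legendre_orth p _ hdu0, neg_zero]
end

section
/- Let p ≥ 1 and let L be a linear functional on the space of real polynomials such that L(q) = ∫₋₁¹ q(x) dx for every polynomial q of degree ≤ 2p − 1, and L(φ_p²) = 2/p. Then L(φ_{2p}) = 2 (p+1)/(p (2p+1)) · (p!)⁴ (4p)! / ((2p)!)⁴, where φ_n denotes the n-th Legendre polynomial. -/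
open Polynomial intervalIntegral

section Aux

/-- Fundamental theorem of calculus for polynomials on `[-1,1]`. -/
lemma legendre_aux_ftc (q : Polynomial ℝ) :
    ∫ x in (-1:ℝ)..1, (derivative q).eval x = q.eval 1 - q.eval (-1) := by
  refine intervalIntegral.integral_deriv_eq_sub' _ (funext fun x => q.deriv) ?_ ?_
  · exact fun x _ => q.differentiable.differentiableAt
  · exact (q.derivative.continuous_aeval).continuousOn

lemma legendre_aux_pint (q : Polynomial ℝ) :
    IntervalIntegrable (fun x => q.eval x) MeasureTheory.volume (-1) 1 :=
  (q.continuous_aeval).intervalIntegrable _ _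

lemma legendre_aux_dvd_iter (n k : ℕ) (h : k ≤ n) :
    ∃ q : Polynomial ℝ, derivative^[k] ((X^2-1:Polynomial ℝ)^n) = (X^2-1)^(n-k) * q := by
  induction k with
  | zero => exact ⟨1, by simp⟩
  | succ k ih =>
    obtain ⟨q, hq⟩ := ih (Nat.le_of_succ_le h)
    have hm : n - k = (n - (k+1)) + 1 := by omega
    refine ⟨C ((n-k : ℕ) : ℝ) * derivative (X^2-1) * q + (X^2-1) * derivative q, ?_⟩
    rw [Function.iterate_succ_apply', hq, hm, derivative_mul, derivative_pow]
    push_cast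
    ring_nf

lemma legendre_aux_eval_iter_zero {n k : ℕ} (h : k < n) {x : ℝ} (hx : x^2 = 1) :
    (derivative^[k] ((X^2-1:Polynomial ℝ)^n)).eval x = 0 := by
  obtain ⟨q, hq⟩ := legendre_aux_dvd_iter n k h.le
  have h1 : n - k ≠ 0 := by omega
  simp [hq, hx, zero_pow h1]

lemma legendre_aux_sq_monic : ((X^2-1:Polynomial ℝ)).Monic := by
  have h : (X^2-1:Polynomial ℝ) = X^2 - C 1 := by simp
  rw [h]; exact monic_X_pow_sub_C (1:ℝ) two_ne_zero

lemma legendre_aux_deg_lc (n k : ℕ) (h : k ≤ 2*n) :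
    (derivative^[k] ((X^2-1:Polynomial ℝ)^n)).natDegree = 2*n - k ∧
    (derivative^[k] ((X^2-1:Polynomial ℝ)^n)).leadingCoeff = ((2*n).descFactorial k : ℝ) := by
  induction k with
  | zero =>
    have hm := legendre_aux_sq_monic.pow (n := n)
    simp only [Function.iterate_zero_apply]
    have hd2 : (X^2-1:Polynomial ℝ).natDegree = 2 := by
      have h : (X^2-1:Polynomial ℝ) = X^2 - C 1 := by simp
      rw [h]; exact natDegree_X_pow_sub_C
    constructor
    · rw [legendre_aux_sq_monic.natDegree_pow, hd2]; omega
    · simp [hm.leadingCoeff]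
  | succ k ih =>
    obtain ⟨hd, hl⟩ := ih (Nat.le_of_succ_le h)
    set P := derivative^[k] ((X^2-1:Polynomial ℝ)^n) with hP
    have hc : (derivative P).coeff (2*n - (k+1)) = ((2*n).descFactorial (k+1) : ℝ) := by
      rw [coeff_derivative]
      have h1 : 2*n - (k+1) + 1 = 2*n - k := by omega
      rw [h1]
      have h2 : P.coeff (2*n-k) = ((2*n).descFactorial k : ℝ) := by rw [← hd]; exact hl
      rw [h2, Nat.descFactorial_succ]
      have h3 : ((2*n - (k+1) : ℕ) : ℝ) + 1 = ((2*n - k : ℕ) : ℝ) := by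
        push_cast [Nat.cast_sub (by omega : k+1 ≤ 2*n), Nat.cast_sub (by omega : k ≤ 2*n)]
        ring
      rw [h3]; push_cast; ring
    have hne : ((2*n).descFactorial (k+1) : ℝ) ≠ 0 := by
      have : (2*n).descFactorial (k+1) ≠ 0 := by
        simp [Nat.descFactorial_eq_zero_iff_lt]; omega
      exact_mod_cast this
    have hle : (derivative P).natDegree ≤ 2*n - (k+1) := by
      have := natDegree_derivative_le P
      omega
    have hge : 2*n - (k+1) ≤ (derivative P).natDegree :=
      le_natDegree_of_ne_zero (hc ▸ hne)
    have hdeg : (derivative P).natDegree = 2*n - (k+1) := le_antisymm hle hge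
    rw [Function.iterate_succ_apply', ← hP]
    exact ⟨hdeg, by rw [leadingCoeff, hdeg, hc]⟩

/-- The basic integral `∫ (x²−1)ⁿ`. -/
noncomputable def Jleg (n : ℕ) : ℝ := ∫ x in (-1:ℝ)..1, ((X^2-1:Polynomial ℝ)^n).eval x

lemma Jleg_rec (m : ℕ) : (2*(m:ℝ)+3) * Jleg (m+1) + (2*m+2) * Jleg m = 0 := by
  have hq : derivative (X * (X^2-1:Polynomial ℝ)^(m+1))
      = C (2*(m:ℝ)+3) * (X^2-1)^(m+1) + C (2*(m:ℝ)+2) * (X^2-1)^m := by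
    rw [derivative_mul, derivative_pow]
    have h1 : (X^2-1:Polynomial ℝ)^(m+1) = (X^2-1)^m * (X^2-1) := by ring
    push_cast
    rw [h1]
    simp [derivative_X, derivative_sub, derivative_one, derivative_X_pow, map_ofNat]
    ring_nf
  have h0 := legendre_aux_ftc (X * (X^2-1:Polynomial ℝ)^(m+1))
  rw [hq] at h0
  have hsplit : ∫ x in (-1:ℝ)..1,
      (C (2*(m:ℝ)+3) * (X^2-1)^(m+1) + C (2*(m:ℝ)+2) * (X^2-1)^m : Polynomial ℝ).eval x
      = (2*(m:ℝ)+3) * Jleg (m+1) + (2*(m:ℝ)+2) * Jleg m := by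
    simp only [eval_add, eval_mul, eval_C]
    rw [intervalIntegral.integral_add (((legendre_aux_pint _).const_mul _))
      (((legendre_aux_pint _).const_mul _)),
      intervalIntegral.integral_const_mul, intervalIntegral.integral_const_mul]
    rfl
  rw [hsplit] at h0
  have he : (X * (X^2-1:Polynomial ℝ)^(m+1)).eval 1 = 0 := by simp
  have he' : (X * (X^2-1:Polynomial ℝ)^(m+1)).eval (-1) = 0 := by
    simp [zero_pow (Nat.succ_ne_zero m)]
  rw [he, he'] at h0
  linarith [h0]

lemma Jleg_val (n : ℕ) :
    Jleg n = (-1)^n * 2^(2*n+1) * (n.factorial)^2 / ((2*n+1).factorial) := by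
  induction n with
  | zero => simp [Jleg]; norm_num
  | succ m ih =>
    have hrec := Jleg_rec m
    have hpos : (2*(m:ℝ)+3) ≠ 0 := by positivity
    have hfac1 : ((2*(m+1)+1).factorial : ℝ)
        = (2*(m:ℝ)+3) * (2*(m:ℝ)+2) * ((2*m+1).factorial : ℝ) := by
      have : 2*(m+1)+1 = (2*m+1) + 1 + 1 := by ring
      rw [this, Nat.factorial_succ, Nat.factorial_succ]
      push_cast; ring
    have hfac2 : ((m+1).factorial : ℝ) = ((m:ℝ)+1) * (m.factorial : ℝ) := by
      rw [Nat.factorial_succ]; push_cast; ring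
    have hJ : Jleg (m+1) = -(2*(m:ℝ)+2) * Jleg m / (2*(m:ℝ)+3) := by
      field_simp at hrec ⊢; linarith
    rw [hJ, ih]
    have hne : ((2*m+1).factorial : ℝ) ≠ 0 := by exact_mod_cast (2*m+1).factorial_ne_zero
    rw [hfac1, hfac2]
    field_simp [hfac1, hfac2]
    ring

/-- `g n k` is the `k`-th derivative of `(X²−1)ⁿ`. -/
noncomputable def gleg (n k : ℕ) : Polynomial ℝ := derivative^[k] ((X^2-1:Polynomial ℝ)^n)

lemma gleg_succ (n k : ℕ) : gleg n (k+1) = derivative (gleg n k) :=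
  Function.iterate_succ_apply' _ _ _

lemma gleg_deg_lc (n k : ℕ) (h : k ≤ 2*n) :
    (gleg n k).natDegree = 2*n - k ∧ (gleg n k).leadingCoeff = ((2*n).descFactorial k : ℝ) :=
  legendre_aux_deg_lc n k h

lemma gleg_eval_zero {n k : ℕ} (h : k < n) {x : ℝ} (hx : x^2 = 1) : (gleg n k).eval x = 0 :=
  legendre_aux_eval_iter_zero h hx

lemma gleg_top (n : ℕ) : gleg n (2*n) = C (((2*n).factorial : ℝ)) := by
  obtain ⟨hd, hl⟩ := gleg_deg_lc n (2*n) le_rfl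
  have h0 : (gleg n (2*n)).natDegree = 0 := by simpa using hd
  have := Polynomial.eq_C_of_natDegree_le_zero (le_of_eq h0)
  rw [this]
  congr 1
  have h1 : (gleg n (2*n)).coeff 0 = (gleg n (2*n)).leadingCoeff := by rw [leadingCoeff, h0]
  have hl' : (gleg n (2*n)).leadingCoeff = (((2*n).descFactorial (2*n)) : ℝ) := hl
  rw [h1, hl', Nat.descFactorial_self]

lemma gleg_parts (n k : ℕ) (hk : k < n) :
    ∫ x in (-1:ℝ)..1, (gleg n (n+k+1) * gleg n (n-(k+1))).eval x
      = - ∫ x in (-1:ℝ)..1, (gleg n (n+k) * gleg n (n-k)).eval x := by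
  have hsub : n - (k+1) + 1 = n - k := by omega
  have hq : derivative (gleg n (n+k) * gleg n (n-(k+1)))
      = gleg n (n+k+1) * gleg n (n-(k+1)) + gleg n (n+k) * gleg n (n-k) := by
    rw [derivative_mul, ← gleg_succ, ← gleg_succ, hsub]
  have h0 := legendre_aux_ftc (gleg n (n+k) * gleg n (n-(k+1)))
  rw [hq] at h0
  have hz1 : (gleg n (n-(k+1))).eval 1 = 0 := gleg_eval_zero (by omega) (by norm_num)
  have hz2 : (gleg n (n-(k+1))).eval (-1) = 0 := gleg_eval_zero (by omega) (by norm_num)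
  simp only [eval_add, eval_mul, hz1, hz2, mul_zero, add_zero] at h0
  rw [intervalIntegral.integral_add
    (by simpa using legendre_aux_pint (gleg n (n+k+1) * gleg n (n-(k+1))))
    (by simpa using legendre_aux_pint (gleg n (n+k) * gleg n (n-k)))] at h0
  simp only [eval_mul] at h0 ⊢
  linarith [h0]

lemma gleg_chain (n : ℕ) : ∀ k, k ≤ n →
    ∫ x in (-1:ℝ)..1, (gleg n (n+k) * gleg n (n-k)).eval x
      = (-1)^k * ∫ x in (-1:ℝ)..1, (gleg n n * gleg n n).eval x := by
  intro k
  induction k with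
  | zero => intro _; simp
  | succ k ih =>
    intro hk
    have e : n + (k+1) = n + k + 1 := rfl
    rw [e, gleg_parts n k (by omega), ih (by omega)]
    ring

lemma gleg_normsq (n : ℕ) :
    ∫ x in (-1:ℝ)..1, ((gleg n n).eval x)^2
      = ((2*n).factorial : ℝ) * 2^(2*n+1) * (n.factorial)^2 / ((2*n+1).factorial) := by
  have h := gleg_chain n n le_rfl
  have h2 : n + n = 2*n := by ring
  have hL : ∫ x in (-1:ℝ)..1, (gleg n (n+n) * gleg n (n-n)).eval x
      = ((2*n).factorial : ℝ) * Jleg n := by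
    simp only [h2, Nat.sub_self, gleg_top]
    have : gleg n 0 = (X^2-1:Polynomial ℝ)^n := rfl
    simp only [this, eval_mul, eval_C]
    rw [intervalIntegral.integral_const_mul]
    rfl
  rw [hL] at h
  have hsq : ∀ x : ℝ, ((gleg n n).eval x)^2 = (gleg n n * gleg n n).eval x := by
    intro x; simp [sq]
  simp only [hsq]
  have hneg : ((-1:ℝ))^n * (-1)^n = 1 := by
    rw [← pow_add, show n+n = 2*n from (two_mul n).symm, pow_mul]; norm_num
  have hI : ∫ x in (-1:ℝ)..1, (gleg n n * gleg n n).eval x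
      = (-1)^n * (((2*n).factorial : ℝ) * Jleg n) := by
    rw [h, show ((-1:ℝ))^n * ((-1)^n * ∫ x in (-1:ℝ)..1, (gleg n n * gleg n n).eval x)
      = ((-1:ℝ))^n * (-1)^n * ∫ x in (-1:ℝ)..1, (gleg n n * gleg n n).eval x from by ring,
      hneg, one_mul]
  rw [hI, Jleg_val, show ((-1:ℝ))^n * (((2*n).factorial:ℝ)
        * ((-1)^n * 2^(2*n+1) * ((n.factorial:ℝ))^2 / (((2*n+1).factorial:ℝ))))
      = ((-1:ℝ))^n * (-1)^n * (((2*n).factorial:ℝ)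
        * (2^(2*n+1) * ((n.factorial:ℝ))^2 / (((2*n+1).factorial:ℝ)))) from by ring,
    hneg]
  ring

lemma legendre_eq (n : ℕ) : legendre n = C (1 / (2 ^ n * n.factorial : ℝ)) * gleg n n := rfl

lemma legendre_a_ne (n : ℕ) : (1 / (2 ^ n * n.factorial : ℝ)) ≠ 0 := by positivity

lemma legendre_fac_ne (m : ℕ) : ((m.factorial : ℝ)) ≠ 0 := by
  exact_mod_cast m.factorial_ne_zero

lemma gleg_deg (n : ℕ) : (gleg n n).natDegree = n := by
  have := (gleg_deg_lc n n (by omega)).1; omega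

lemma gleg_lc (n : ℕ) :
    (gleg n n).leadingCoeff * (n.factorial : ℝ) = ((2*n).factorial : ℝ) := by
  rw [(gleg_deg_lc n n (by omega)).2]
  rw [← Nat.cast_mul, mul_comm, ← Nat.factorial_mul_descFactorial (by omega : n ≤ 2*n),
    show 2*n - n = n by omega]

lemma legendre_natDegree (n : ℕ) : (legendre n).natDegree = n := by
  rw [legendre_eq, natDegree_C_mul (legendre_a_ne n), gleg_deg]

lemma legendre_lc (n : ℕ) :
    (legendre n).leadingCoeff = ((2*n).factorial : ℝ) / (2^n * (n.factorial : ℝ)^2) := by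
  rw [legendre_eq, leadingCoeff_mul, leadingCoeff_C]
  have := gleg_lc n
  field_simp
  linear_combination this

lemma legendre_ne_zero (n : ℕ) : legendre n ≠ 0 := by
  intro h
  have := legendre_lc n
  rw [h, leadingCoeff_zero] at this
  have h2 : ((2*n).factorial : ℝ) / (2^n * (n.factorial : ℝ)^2) > 0 := by positivity
  linarith [this ▸ h2]

lemma legendre_norm (n : ℕ) :
    ∫ x in (-1:ℝ)..1, ((legendre n).eval x)^2 = 2 / (2*(n:ℝ)+1) := by
  have hev : ∀ x : ℝ, ((legendre n).eval x)^2
      = (1 / (2 ^ n * n.factorial : ℝ))^2 * ((gleg n n).eval x)^2 := by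
    intro x; rw [legendre_eq]; simp [mul_pow]
  simp only [hev]
  rw [intervalIntegral.integral_const_mul, gleg_normsq]
  have h1 : ((2*n+1).factorial : ℝ) = (2*(n:ℝ)+1) * ((2*n).factorial : ℝ) := by
    rw [Nat.factorial_succ]; push_cast; ring
  have h2 : (2*(n:ℝ)+1) ≠ 0 := by positivity
  rw [h1]
  field_simp [h1]
  ring

lemma legendre_int (n : ℕ) (hn : 1 ≤ n) :
    ∫ x in (-1:ℝ)..1, (legendre n).eval x = 0 := by
  have hg : gleg n n = derivative (gleg n (n-1)) := by
    rw [← gleg_succ, show n - 1 + 1 = n by omega]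
  have : ∫ x in (-1:ℝ)..1, (gleg n n).eval x = 0 := by
    rw [hg, legendre_aux_ftc, gleg_eval_zero (by omega) (by norm_num),
      gleg_eval_zero (by omega) (by norm_num), sub_zero]
  simp only [legendre_eq, eval_mul, eval_C]
  rw [intervalIntegral.integral_const_mul, this, mul_zero]

end Aux

theorem stmt_10 (p : ℕ) (hp : 1 ≤ p) (L : Polynomial ℝ →ₗ[ℝ] ℝ)
    (hexact : ∀ q : Polynomial ℝ, q.degree ≤ (2 * p - 1 : ℕ) →
      L q = ∫ x in (-1 : ℝ)..1, q.eval x)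
    (hLp : L (legendre p ^ 2) = 2 / (p : ℝ)) :
    L (legendre (2 * p))
      = 2 * ((p : ℝ) + 1) / ((p : ℝ) * (2 * (p : ℝ) + 1)) *
          (((p.factorial : ℝ)) ^ 4 * ((4 * p).factorial : ℝ) /
            (((2 * p).factorial : ℝ)) ^ 4) := by
  set c : ℝ := (((4*p).factorial : ℝ)) * ((p.factorial : ℝ))^4 / (((2*p).factorial : ℝ))^4 with hc
  have hcpos : 0 < c := by positivity
  have hlc : (legendre (2*p)).leadingCoeff = (C c * legendre p ^ 2).leadingCoeff := by
    rw [leadingCoeff_mul, leadingCoeff_C, leadingCoeff_pow, legendre_lc, legendre_lc,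
      show 2*(2*p) = 4*p by ring, hc]
    have h1 := legendre_fac_ne (4*p); have h2 := legendre_fac_ne (2*p)
    have h3 := legendre_fac_ne p
    have h4 : ((2:ℝ))^p ≠ 0 := by positivity
    field_simp
    ring
  have hne : legendre (2*p) ≠ 0 := legendre_ne_zero _
  have hdeg : (legendre (2*p)).degree = (C c * legendre p ^ 2).degree := by
    rw [degree_eq_natDegree hne, degree_eq_natDegree (by
      intro h
      apply legendre_ne_zero p
      rcases mul_eq_zero.mp h with h' | h'
      · exact absurd h' (by simp [hcpos.ne'])
      · exact pow_eq_zero_iff (by norm_num) |>.mp h'), legendre_natDegree,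
      natDegree_C_mul hcpos.ne', natDegree_pow, legendre_natDegree]
  set r : Polynomial ℝ := legendre (2*p) - C c * legendre p ^ 2 with hr
  have hdlt : r.degree < ((2*p : ℕ) : WithBot ℕ) := by
    have := Polynomial.degree_sub_lt hdeg hne hlc
    rw [degree_eq_natDegree hne, legendre_natDegree] at this
    exact this
  have hdle : r.degree ≤ ((2*p - 1 : ℕ) : WithBot ℕ) := by
    by_cases h0 : r = 0
    · simp [h0]
    · rw [degree_eq_natDegree h0] at hdlt ⊢
      have : r.natDegree < 2*p := by exact_mod_cast hdlt
      exact_mod_cast Nat.cast_le.mpr (by omega : r.natDegree ≤ 2*p - 1)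
  have hLr := hexact r hdle
  have hsplitL : L (legendre (2*p)) = c * L (legendre p ^ 2) + L r := by
    have : legendre (2*p) = c • (legendre p ^ 2) + r := by
      rw [hr, Polynomial.smul_eq_C_mul]; ring
    rw [this, map_add, map_smul, smul_eq_mul]
  have hintr : ∫ x in (-1:ℝ)..1, r.eval x = - (c * (2 / (2*(p:ℝ)+1))) := by
    have hev : ∀ x : ℝ, r.eval x
        = (legendre (2*p)).eval x - c * ((legendre p).eval x)^2 := by
      intro x; rw [hr]; simp [sq]
    simp only [hev]
    rw [intervalIntegral.integral_sub (legendre_aux_pint _) (by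
        simpa [sq, mul_assoc] using (legendre_aux_pint (C c * legendre p * legendre p)))]
    have h1 : ∫ x in (-1:ℝ)..1, c * ((legendre p).eval x)^2
        = c * ∫ x in (-1:ℝ)..1, ((legendre p).eval x)^2 :=
      intervalIntegral.integral_const_mul _ _
    rw [h1, legendre_int (2*p) (by omega), legendre_norm]
    ring
  rw [hsplitL, hLp, hLr, hintr]
  have hp0 : ((p:ℝ)) ≠ 0 := by positivity
  have hp1 : (2*(p:ℝ)+1) ≠ 0 := by positivity
  rw [hc]
  field_simp
  ring
end

section
/- Let a, u : ℝ → ℝ be infinitely differentiable functions, let x₀ < x₁ be real numbers with a(x₀) = a(x₁) = 0 and a(x) ≥ 0 for all x ∈ [x₀, x₁], and let L_a denote the operator (L_a v)(x) = d/dx (a(x) v′(x)). Then for every integer s ≥ 1, (−1)^{s+1} ∫_{x₀}^{x₁} u(x) · (L_a^s u)(x) dx ≤ 0. (Hence the artificial viscosity term (−1)^{s+1} ε (∂ₓ a ∂ₓ)^s u with ε ≥ 0 does not increase the L² energy ½‖u‖², i.e. it has a stabilising effect.) -/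
open intervalIntegral MeasureTheory

/-- The viscosity operator `(L_a v)(x) = d/dx (a(x) v′(x))`. -/
noncomputable def visc (a : ℝ → ℝ) (v : ℝ → ℝ) : ℝ → ℝ :=
  deriv (fun x => a x * deriv v x)

lemma visc_contDiff {a v : ℝ → ℝ} (ha : ContDiff ℝ (⊤:ℕ∞) a)
    (hv : ContDiff ℝ (⊤:ℕ∞) v) : ContDiff ℝ (⊤:ℕ∞) (visc a v) := by
  have h : ContDiff ℝ (⊤:ℕ∞) (fun x => a x * deriv v x) :=
    ha.mul ((contDiff_infty_iff_deriv.1 hv).2)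
  exact (contDiff_infty_iff_deriv.1 h).2

lemma visc_ibp {a v w : ℝ → ℝ} (ha : ContDiff ℝ (⊤:ℕ∞) a)
    (hv : ContDiff ℝ (⊤:ℕ∞) v) (hw : ContDiff ℝ (⊤:ℕ∞) w)
    {x₀ x₁ : ℝ} (ha0 : a x₀ = 0) (ha1 : a x₁ = 0) :
    ∫ x in x₀..x₁, v x * visc a w x
      = - ∫ x in x₀..x₁, a x * (deriv v x * deriv w x) := by
  set g : ℝ → ℝ := fun x => a x * deriv w x with hg
  have hgc : ContDiff ℝ (⊤:ℕ∞) g := ha.mul (contDiff_infty_iff_deriv.1 hw).2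
  have h1 : ∀ x ∈ Set.uIcc x₀ x₁, HasDerivAt v (deriv v x) x := fun x _ =>
    (hv.differentiable (by simp) x).hasDerivAt
  have h2 : ∀ x ∈ Set.uIcc x₀ x₁, HasDerivAt g (visc a w x) x := fun x _ =>
    (hgc.differentiable (by simp) x).hasDerivAt
  have h3 : IntervalIntegrable (deriv v) volume x₀ x₁ :=
    ((contDiff_infty_iff_deriv.1 hv).2.continuous).intervalIntegrable _ _
  have h4 : IntervalIntegrable (visc a w) volume x₀ x₁ :=
    ((contDiff_infty_iff_deriv.1 hgc).2.continuous).intervalIntegrable _ _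
  have key := intervalIntegral.integral_mul_deriv_eq_deriv_mul h1 h2 h3 h4
  rw [key]
  simp only [hg, ha0, ha1, zero_mul, mul_zero, sub_zero, zero_sub, neg_inj]
  apply intervalIntegral.integral_congr
  intro x _
  ring

lemma visc_symm {a v w : ℝ → ℝ} (ha : ContDiff ℝ (⊤:ℕ∞) a)
    (hv : ContDiff ℝ (⊤:ℕ∞) v) (hw : ContDiff ℝ (⊤:ℕ∞) w)
    {x₀ x₁ : ℝ} (ha0 : a x₀ = 0) (ha1 : a x₁ = 0) :
    ∫ x in x₀..x₁, v x * visc a w x = ∫ x in x₀..x₁, visc a v x * w x := by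
  rw [visc_ibp ha hv hw ha0 ha1]
  have : ∫ x in x₀..x₁, visc a v x * w x = ∫ x in x₀..x₁, w x * visc a v x := by
    apply intervalIntegral.integral_congr; intro x _; ring
  rw [this, visc_ibp ha hw hv ha0 ha1]
  congr 1
  apply intervalIntegral.integral_congr; intro x _; ring

theorem stmt_15 (a u : ℝ → ℝ) (ha : ContDiff ℝ (⊤ : ℕ∞) a) (hu : ContDiff ℝ (⊤ : ℕ∞) u)
    (x₀ x₁ : ℝ) (hx : x₀ < x₁) (ha0 : a x₀ = 0) (ha1 : a x₁ = 0)
    (hanneg : ∀ x ∈ Set.Icc x₀ x₁, 0 ≤ a x)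
    (s : ℕ) (hs : 1 ≤ s) :
    (-1 : ℝ) ^ (s + 1) * ∫ x in x₀..x₁, u x * ((visc a)^[s] u) x ≤ 0 := by
  have ha' : ContDiff ℝ (⊤:ℕ∞) a := ha.of_le (by simp)
  have hu' : ContDiff ℝ (⊤:ℕ∞) u := hu.of_le (by simp)
  -- smoothness of iterates
  have hiter : ∀ n, ContDiff ℝ (⊤:ℕ∞) ((visc a)^[n] u) := by
    intro n
    induction n with
    | zero => exact hu'
    | succ n ih => rw [Function.iterate_succ_apply']; exact visc_contDiff ha' ih
  set L := visc a
  set I : ℕ → ℕ → ℝ := fun m n => ∫ x in x₀..x₁, (L^[m] u) x * (L^[n] u) x with hI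
  have shift : ∀ m n, I m (n + 1) = I (m + 1) n := by
    intro m n
    simp only [hI]
    rw [Function.iterate_succ_apply' L n u, Function.iterate_succ_apply' L m u]
    exact visc_symm ha' (hiter m) (hiter n) ha0 ha1
  have move : ∀ j m n, I m (n + j) = I (m + j) n := by
    intro j
    induction j with
    | zero => simp
    | succ j ih =>
      intro m n
      have : n + (j + 1) = (n + j) + 1 := by ring
      rw [this, shift m (n + j), ih (m + 1) n]
      congr 1
      ring
  rcases Nat.even_or_odd s with he | ho
  · -- s even: s = k + k, integral is ∫ (L^k u)^2 ≥ 0, sign is -1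
    obtain ⟨k, hk⟩ := he
    have h1 : (∫ x in x₀..x₁, u x * (L^[s] u) x) = I k k := by
      have : (∫ x in x₀..x₁, u x * (L^[s] u) x) = I 0 s := by
        simp [hI]
      rw [this, hk]
      have : I 0 (k + k) = I (0 + k) k := move k 0 k
      simpa using this
    have h2 : 0 ≤ I k k := by
      apply intervalIntegral.integral_nonneg hx.le
      intro x _
      exact mul_self_nonneg _
    have h3 : (-1 : ℝ) ^ (s + 1) = -1 := by
      have hev : Even s := ⟨k, hk⟩
      exact (Even.add_one hev).neg_one_pow
    rw [h1, h3]
    nlinarith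
  · -- s odd: s = 2k + 1, integral is ∫ L^k u * L^(k+1) u = -∫ a (L^k u)'^2 ≤ 0
    obtain ⟨k, hk⟩ := ho
    have h1 : (∫ x in x₀..x₁, u x * (L^[s] u) x) = I k (k + 1) := by
      have e0 : (∫ x in x₀..x₁, u x * (L^[s] u) x) = I 0 s := by simp [hI]
      rw [e0, hk]
      have : I 0 ((k + 1) + k) = I (0 + k) (k + 1) := move k 0 (k + 1)
      have e1 : 2 * k + 1 = (k + 1) + k := by ring
      rw [e1, this]
      simp
    have h2 : I k (k + 1) = - ∫ x in x₀..x₁,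
        a x * (deriv (L^[k] u) x * deriv (L^[k] u) x) := by
      simp only [hI]
      rw [Function.iterate_succ_apply' L k u]
      exact visc_ibp ha' (hiter k) (hiter k) ha0 ha1
    have h3 : 0 ≤ ∫ x in x₀..x₁,
        a x * (deriv (L^[k] u) x * deriv (L^[k] u) x) := by
      apply intervalIntegral.integral_nonneg hx.le
      intro x hxm
      exact mul_nonneg (hanneg x hxm) (mul_self_nonneg _)
    have h4 : (-1 : ℝ) ^ (s + 1) = 1 := by
      have : Even (s + 1) := Odd.add_one ⟨k, hk⟩
      exact this.neg_one_pow
    rw [h1, h2, h4]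
    linarith
end

section
/- Let V be a real inner product space, let u, v, w ∈ V, let Δt ∈ ℝ, and let ε ∈ ℝ satisfy the quadratic equation A ε² + B ε + C = 0, where A := Δt ‖w‖², B := −2⟨u, w⟩ − 2Δt ⟨v, w⟩, and C := Δt ‖v‖². Then ‖u + Δt (v − ε w)‖² = ‖u‖² + 2 Δt ⟨u, v⟩. (Here v plays the role of the semidiscrete time derivative ∂ₜu, w the role of the dissipation term A^s u, and u + Δt(v − εw) is an explicit Euler step with adaptive artificial dissipation of strength ε; the identity shows the quadratic growth term (Δt)²‖∂ₜu^ε‖² is exactly compensated, which is the key mechanism of Lemma 3 on fully discrete stability.) -/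
open scoped RealInnerProductSpace

theorem stmt_16 {V : Type*} [NormedAddCommGroup V] [InnerProductSpace ℝ V]
    (u v w : V) (Δt ε : ℝ)
    (hroot : (Δt * ‖w‖ ^ 2) * ε ^ 2
        + (-2 * ⟪u, w⟫ - 2 * Δt * ⟪v, w⟫) * ε
        + (Δt * ‖v‖ ^ 2) = 0) :
    ‖u + Δt • (v - ε • w)‖ ^ 2 = ‖u‖ ^ 2 + 2 * Δt * ⟪u, v⟫ := by
  have h := norm_add_sq_real u (Δt • (v - ε • w))
  rw [h]
  have h2 : ‖Δt • (v - ε • w)‖ ^ 2 = Δt ^ 2 * ‖v - ε • w‖ ^ 2 := by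
    rw [norm_smul, Real.norm_eq_abs]; ring_nf; rw [sq_abs]; ring
  have h3 := norm_sub_sq_real v (ε • w)
  have h4 : ‖ε • w‖ ^ 2 = ε ^ 2 * ‖w‖ ^ 2 := by
    rw [norm_smul, Real.norm_eq_abs]; ring_nf; rw [sq_abs]; ring
  simp only [inner_smul_right, inner_sub_right, h2, h3, h4, real_inner_smul_right] at *
  linear_combination Δt * hroot
end
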